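/- arXiv:2111.11583 — 3 statements merged into one kernel-verified Lean document; each statement's English description precedes it below -/
import Mathlib

section
/- Let m be a finite-dimensional Lie algebra over F_q with an ideal u consisting of nilpotent elements such that m/u is reductive. If π: m → m/u is the natural projection, then the nilpotent cone of m equals the preimage under π of the nilpotent cone of m/u; consequently |N(m)| = q^{dim u} · |N(m/u)|, where N denotes the set of nilpotent elements rational over F_q. -/
/-!
Let `x ∈ m` have nilpotent image in `m/u`, and let `V` be a finite-dimensional representation
of `m`. By Engel's theorem `u` acts nilpotently on `V`, so `⁅u, V⁆ ⊊ V` when `V ≠ 0`. On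
`V/⁅u, V⁆` the ideal `u` acts trivially, so this is a representation of `m/u` and `x` acts
nilpotently on it; on `⁅u, V⁆` it does so by induction on the dimension. Hence `x` is
nilpotent in `m`; the converse holds because representations of `m/u` pull back to `m`.
The nilpotent cone is therefore a union of cosets of `u`, which gives the count.
-/

attribute [local instance 100] LieRing.ofAssociativeRing

/-- `x ∈ m` is a nilpotent element: every finite-dimensional Lie algebra representation
sends it to a nilpotent endomorphism. -/
def IsNilpotentElement (F m : Type) [Field F] [LieRing m] [LieAlgebra F m] (x : m) : Prop :=
  ∀ (V : Type) [AddCommGroup V] [Module F V] [FiniteDimensional F V]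
    (r : m →ₗ⁅F⁆ Module.End F V), IsNilpotent (r x)

open LieModule

theorem Module.End.isNilpotent_of_isNilpotent_restrict_of_isNilpotent_mapQ
    {R M : Type*} [CommRing R] [AddCommGroup M] [Module R M] {f : Module.End R M}
    {p : Submodule R M} (hp : p ≤ p.comap f) (hres : IsNilpotent (f.restrict hp))
    (hquot : IsNilpotent (p.mapQ p f hp)) : IsNilpotent f := by
  obtain ⟨a, ha⟩ := hquot
  obtain ⟨b, hb⟩ := hres
  refine ⟨b + a, LinearMap.ext fun v => ?_⟩
  have hv : (f ^ a) v ∈ p := by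
    have := LinearMap.congr_fun ha (Submodule.Quotient.mk v)
    rwa [← Submodule.mapQ_pow, Submodule.mapQ_apply, LinearMap.zero_apply,
      Submodule.Quotient.mk_eq_zero] at this
  have := congr_arg Subtype.val (LinearMap.congr_fun hb ⟨_, hv⟩)
  rw [Module.End.pow_restrict] at this
  simpa [pow_add] using this

theorem LieIdeal.lie_top_ne_top_of_forall_isNilpotent {R L M : Type*} [CommRing R] [LieRing L]
    [LieAlgebra R L] [AddCommGroup M] [Module R M] [LieRingModule L M] [LieModule R L M]
    [IsNoetherian R M] [Nontrivial M] (I : LieIdeal R L)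
    (hI : ∀ y ∈ I, IsNilpotent (toEnd R L M y)) : ⁅I, (⊤ : LieSubmodule R L M)⁆ ≠ ⊤ := by
  have : LieModule.IsNilpotent I M :=
    (isNilpotent_iff_forall' (R := R)).2 fun y => hI y y.2
  obtain ⟨k, hk⟩ := IsNilpotent.nilpotent R I M
  intro htop
  have hlcs : ∀ n, I.lcs M n = ⊤ := by
    intro n
    induction n with
    | zero => rfl
    | succ n ih => rw [LieIdeal.lcs_succ, ih, htop]
  have := I.coe_lcs_eq M k
  rw [hlcs, hk] at this
  simp at this

def LieSubmodule.Quotient.mkHom {R L : Type*} [CommRing R] [LieRing L] [LieAlgebra R L]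
    (I : LieIdeal R L) : L →ₗ⁅R⁆ L ⧸ I :=
  { mk' I with map_lie' := rfl }

def LieHom.liftQ {R L L' : Type*} [CommRing R] [LieRing L] [LieAlgebra R L] [LieRing L']
    [LieAlgebra R L'] (f : L →ₗ⁅R⁆ L') (I : LieIdeal R L) (h : I ≤ f.ker) : L ⧸ I →ₗ⁅R⁆ L' :=
  { (I : Submodule R L).liftQ f.toLinearMap fun y hy => f.mem_ker.mp (h hy) with
    map_lie' := by
      rintro ⟨x⟩ ⟨y⟩
      exact f.map_lie x y }

theorem LieSubmodule.natCard_preimage_mk' {R L M : Type*} [CommRing R] [LieRing L]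
    [LieAlgebra R L] [AddCommGroup M] [Module R M] [LieRingModule L M] [LieModule R L M]
    (N : LieSubmodule R L M) (t : Set (M ⧸ N)) :
    Nat.card (LieSubmodule.Quotient.mk' N ⁻¹' t) = Nat.card N * Nat.card t := by
  rw [← Nat.card_prod]
  exact Nat.card_congr (QuotientAddGroup.preimageMkEquivAddSubgroupProdSet N.toAddSubgroup t)

section

variable {F m : Type} [Field F] [LieRing m] [LieAlgebra F m]

theorem IsNilpotentElement.map {m' : Type} [LieRing m'] [LieAlgebra F m'] {x : m}
    (hx : IsNilpotentElement F m x) (f : m →ₗ⁅F⁆ m') : IsNilpotentElement F m' (f x) :=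
  fun V _ _ _ r => hx V (r.comp f)

variable {u : LieIdeal F m} {x : m}

theorem isNilpotent_toEnd_of_le_ker
    (hx : IsNilpotentElement F (m ⧸ u) (LieSubmodule.Quotient.mk' u x))
    (V : Type) [AddCommGroup V] [Module F V] [FiniteDimensional F V] [LieRingModule m V]
    [LieModule F m V] (hV : u ≤ (toEnd F m V).ker) : IsNilpotent (toEnd F m V x) :=
  hx V ((toEnd F m V).liftQ u hV)

theorem isNilpotent_toEnd_of_isNilpotentElement_mk
    (hx : IsNilpotentElement F (m ⧸ u) (LieSubmodule.Quotient.mk' u x))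
    (V : Type) [AddCommGroup V] [Module F V] [FiniteDimensional F V] [LieRingModule m V]
    [LieModule F m V] (hu : ∀ y ∈ u, IsNilpotent (toEnd F m V y)) :
    IsNilpotent (toEnd F m V x) := by
  induction h : Module.finrank F V using Nat.strong_induction_on generalizing V with
  | _ n ih =>
  rcases subsingleton_or_nontrivial V with _ | _
  · exact ⟨0, Subsingleton.elim _ _⟩
  set W := ⁅u, (⊤ : LieSubmodule F m V)⁆
  have hW_lt : Module.finrank F W < n := by
    rw [← h]
    apply Submodule.finrank_lt
    rw [Ne, LieSubmodule.toSubmodule_eq_top]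
    exact u.lie_top_ne_top_of_forall_isNilpotent hu
  have hW : IsNilpotent (toEnd F m W x) :=
    ih _ hW_lt W
      (fun y hy => Module.End.isNilpotent.restrict (fun _ hv => W.lie_mem hv) (hu y hy)) rfl
  have hVW : IsNilpotent (toEnd F m (V ⧸ W) x) := by
    refine isNilpotent_toEnd_of_le_ker hx _ fun y hy => LinearMap.ext fun v => ?_
    obtain ⟨v, rfl⟩ := LieSubmodule.Quotient.surjective_mk' W v
    exact (LieSubmodule.Quotient.mk_eq_zero W).2
      (LieSubmodule.lie_mem_lie hy (LieSubmodule.mem_top v))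
  exact Module.End.isNilpotent_of_isNilpotent_restrict_of_isNilpotent_mapQ
    (fun _ hv => W.lie_mem hv) hW hVW

theorem isNilpotentElement_iff_mk (hu : ∀ y ∈ u, IsNilpotentElement F m y) :
    IsNilpotentElement F m x ↔ IsNilpotentElement F (m ⧸ u) (LieSubmodule.Quotient.mk' u x) := by
  refine ⟨fun hx => hx.map (LieSubmodule.Quotient.mkHom u), fun hx V _ _ _ r => ?_⟩
  let _ := LieRingModule.compLieHom V r
  let _ := LieModule.compLieHom V r
  exact isNilpotent_toEnd_of_isNilpotentElement_mk hx V fun y hy => hu y hy V (toEnd F m V)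

end

theorem stmt_1_general (F : Type) [Field F] [Fintype F]
    (m : Type) [LieRing m] [LieAlgebra F m] [Module.Finite F m]
    (u : LieIdeal F m)
    -- the ideal `u` consists of nilpotent elements
    (hu : ∀ x ∈ u, IsNilpotentElement F m x) :
    {x : m | IsNilpotentElement F m x} =
      (LieSubmodule.Quotient.mk' u) ⁻¹' {y : m ⧸ u | IsNilpotentElement F (m ⧸ u) y} ∧
    Nat.card {x : m | IsNilpotentElement F m x} =
      Fintype.card F ^ Module.finrank F u *
        Nat.card {y : m ⧸ u | IsNilpotentElement F (m ⧸ u) y} := by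
  have hcone : {x : m | IsNilpotentElement F m x} =
      (LieSubmodule.Quotient.mk' u) ⁻¹' {y : m ⧸ u | IsNilpotentElement F (m ⧸ u) y} :=
    Set.ext fun _ => isNilpotentElement_iff_mk hu
  refine ⟨hcone, ?_⟩
  rw [hcone, LieSubmodule.natCard_preimage_mk', Module.natCard_eq_pow_finrank (K := F),
    Nat.card_eq_fintype_card]

theorem stmt_1 (F : Type) [Field F] [Fintype F]
    (m : Type) [LieRing m] [LieAlgebra F m] [Module.Finite F m]
    (u : LieIdeal F m)
    -- the ideal `u` consists of nilpotent elements
    (hu : ∀ x ∈ u, IsNilpotentElement F m x)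
    -- the quotient `m/u` is reductive: its radical equals its center
    (hred : LieAlgebra.radical F (m ⧸ u) = LieAlgebra.center F (m ⧸ u)) :
    {x : m | IsNilpotentElement F m x} =
      (LieSubmodule.Quotient.mk' u) ⁻¹' {y : m ⧸ u | IsNilpotentElement F (m ⧸ u) y} ∧
    Nat.card {x : m | IsNilpotentElement F m x} =
      Fintype.card F ^ Module.finrank F u *
        Nat.card {y : m ⧸ u | IsNilpotentElement F (m ⧸ u) y} :=
  stmt_1_general F m u hu
end

section
/- Let H be a split connected reductive group over F_q. The coproduct Δ_H on integer-valued functions on subsets of the simple roots Π_H preserves the subspace of associate-invariant functions. Precisely, if δ_O is the indicator function of an equivalence class O of the associate relation, then Δ_H(δ_O) = Σ_{(O_1,O_2)} n_O^{O_1,O_2} δ_{O_1} ⊗ δ_{O_2}, where n_O^{O_1,O_2} = |{w ∈ W_{J_{O_1}}\W_H/W_{J_{O_2}} : Φ(J_{O_1}) ∩ w·Φ(J_{O_2}) = w'·Φ(J_O) for some w' ∈ W_H}|. -/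
/-!
STATEMENT 7: The coproduct `Δ_H` preserves associate-invariant functions: for the
indicator function `δ_O` of an associate class `O`,
`Δ_H(δ_O)(J₁,J₂) = n_O^{[J₁],[J₂]}`, where
`n_O^{O₁,O₂} = |{w ∈ W_{J_{O₁}}\W_H/W_{J_{O₂}} : Φ(J_{O₁}) ∩ w·Φ(J_{O₂}) = w'·Φ(J_O)
for some w' ∈ W_H}|`.

Model: `W` is the (finite) Weyl group acting on the set `R` of roots; `S` indexes simple
roots; `Φ J ⊆ R` is the root subsystem of the Levi attached to `J ⊆ S`; `sub J = W_J`;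
`D J₁ J₂` is the set of minimal double coset representatives `elt w` (characterized by
`helt`); `cap J₁ J₂ w = Φ⁻¹(Φ J₁ ∩ (elt w)·Φ J₂)` (characterized by `hcap`); `rep`
chooses a representative of each associate class; `δO` is the indicator of the class of
`JO`.  Two subsets are associates iff their root subsystems are `W`-conjugate.
-/

open Pointwise

private lemma stmt7_aux {W S R : Type} [Group W] [MulAction W R]
    (Φ : Set S → Set R) (sub : Set S → Subgroup W)
    (hstab : ∀ (J : Set S), ∀ u ∈ sub J, u • Φ J = Φ J)
    {J1 J2 J1' J2' : Set S} {w1 w2 : W}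
    (hw1 : Φ J1' = w1 • Φ J1) (hw2 : Φ J2' = w2 • Φ J2)
    {g d u v : W} (hu : u ∈ sub J1') (hv : v ∈ sub J2')
    (heq : w1 * g * w2⁻¹ = u * d * v) :
    Φ J1' ∩ d • Φ J2' = (u⁻¹ * w1) • (Φ J1 ∩ g • Φ J2) := by
  have hd : d = u⁻¹ * (w1 * g * w2⁻¹) * v⁻¹ := by rw [heq]; group
  have hv' : v⁻¹ • Φ J2' = Φ J2' := hstab _ _ (inv_mem hv)
  have hu' : u⁻¹ • Φ J1' = Φ J1' := hstab _ _ (inv_mem hu)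
  have hJ2 : w2⁻¹ • Φ J2' = Φ J2 := by rw [hw2, inv_smul_smul]
  rw [Set.smul_set_inter]
  congr 1
  · rw [mul_smul, ← hw1, hu']
  · rw [hd]
    simp only [mul_smul, hv', hJ2]

theorem stmt_7 (W S R : Type) [Group W] [Finite W] [MulAction W R]
    (Φ : Set S → Set R) (sub : Set S → Subgroup W)
    (D : Set S → Set S → Type) [∀ J1 J2, Fintype (D J1 J2)]
    (elt : ∀ {J1 J2 : Set S}, D J1 J2 → W)
    -- `D J₁ J₂` is a system of representatives of the double cosets `W_{J₁}\W/W_{J₂}`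
    (helt : ∀ (J1 J2 : Set S) (g : W),
      ∃! w : D J1 J2, ∃ u ∈ sub J1, ∃ v ∈ sub J2, g = u * elt w * v)
    -- `cap J₁ J₂ w` is the subset of simple roots with `Φ(cap) = Φ J₁ ∩ w • Φ J₂`
    (cap : ∀ (J1 J2 : Set S), D J1 J2 → Set S)
    (hcap : ∀ (J1 J2 : Set S) (w : D J1 J2),
      Φ (cap J1 J2 w) = Φ J1 ∩ elt w • Φ J2)
    -- `W_J` stabilizes the root subsystem `Φ J`
    (hstab : ∀ (J : Set S), ∀ u ∈ sub J, u • Φ J = Φ J)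
    -- `W`-conjugate root subsystems have conjugate parabolic Weyl subgroups
    (hconj : ∀ (J1 J2 : Set S) (w : W), Φ J2 = w • Φ J1 →
      (sub J1).map (MulAut.conj w).toMonoidHom = sub J2)
    -- `rep` chooses a representative of each associate class
    (rep : Set S → Set S)
    (hrep1 : ∀ J : Set S, ∃ w : W, Φ (rep J) = w • Φ J)
    (hrep2 : ∀ J J' : Set S, (∃ w : W, Φ J' = w • Φ J) → rep J' = rep J)
    -- `δO` is the indicator function of the associate class of `JO`
    (JO : Set S) (δO : Set S → ℤ)
    (hδ1 : ∀ J : Set S, (∃ w : W, Φ J = w • Φ JO) → δO J = 1)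
    (hδ0 : ∀ J : Set S, ¬ (∃ w : W, Φ J = w • Φ JO) → δO J = 0) :
    ∀ J1 J2 : Set S,
      ∑ w : D J1 J2, δO (cap J1 J2 w) =
        Nat.card {w : D (rep J1) (rep J2) //
          ∃ w' : W, Φ (rep J1) ∩ elt w • Φ (rep J2) = w' • Φ JO} := by
  
  intro J1 J2
  classical
  obtain ⟨w1, hw1⟩ := hrep1 J1
  obtain ⟨w2, hw2⟩ := hrep1 J2
  have hs1 := hconj J1 (rep J1) w1 hw1
  have hs2 := hconj J2 (rep J2) w2 hw2
  have mem1 : ∀ u : W, u ∈ sub (rep J1) ↔ w1⁻¹ * u * w1 ∈ sub J1 := fun u => by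
    rw [← hs1, Subgroup.mem_map_equiv, MulAut.conj_symm_apply]
  have mem2 : ∀ u : W, u ∈ sub (rep J2) ↔ w2⁻¹ * u * w2 ∈ sub J2 := fun u => by
    rw [← hs2, Subgroup.mem_map_equiv, MulAut.conj_symm_apply]
  set P : D J1 J2 → Prop :=
    fun w => ∃ w' : W, Φ J1 ∩ elt w • Φ J2 = w' • Φ JO with hPdef
  set Q : D (rep J1) (rep J2) → Prop :=
    fun w => ∃ w' : W, Φ (rep J1) ∩ elt w • Φ (rep J2) = w' • Φ JO with hQdef
  -- forward and backward maps between double-coset representative sets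
  set F : D J1 J2 → D (rep J1) (rep J2) :=
    fun w => (helt (rep J1) (rep J2) (w1 * elt w * w2⁻¹)).exists.choose with hFdef
  have hF : ∀ w : D J1 J2, ∃ u ∈ sub (rep J1), ∃ v ∈ sub (rep J2),
      w1 * elt w * w2⁻¹ = u * elt (F w) * v :=
    fun w => (helt (rep J1) (rep J2) (w1 * elt w * w2⁻¹)).exists.choose_spec
  set G : D (rep J1) (rep J2) → D J1 J2 :=
    fun d => (helt J1 J2 (w1⁻¹ * elt d * w2)).exists.choose with hGdef
  have hG : ∀ d : D (rep J1) (rep J2), ∃ u ∈ sub J1, ∃ v ∈ sub J2,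
      w1⁻¹ * elt d * w2 = u * elt (G d) * v :=
    fun d => (helt J1 J2 (w1⁻¹ * elt d * w2)).exists.choose_spec
  have hGF : ∀ w : D J1 J2, G (F w) = w := by
    intro w
    obtain ⟨u, hu, v, hv, hEq⟩ := hF w
    have helt' : elt (F w) = u⁻¹ * (w1 * elt w * w2⁻¹) * v⁻¹ := by rw [hEq]; group
    refine (helt J1 J2 (w1⁻¹ * elt (F w) * w2)).unique (hG (F w))
      ⟨w1⁻¹ * u⁻¹ * w1, (mem1 _).mp (inv_mem hu), w2⁻¹ * v⁻¹ * w2,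
        (mem2 _).mp (inv_mem hv), ?_⟩
    rw [helt']; group
  have hFG : ∀ d : D (rep J1) (rep J2), F (G d) = d := by
    intro d
    obtain ⟨u, hu, v, hv, hEq⟩ := hG d
    have helt' : elt (G d) = u⁻¹ * (w1⁻¹ * elt d * w2) * v⁻¹ := by rw [hEq]; group
    refine (helt (rep J1) (rep J2) (w1 * elt (G d) * w2⁻¹)).unique (hF (G d))
      ⟨w1 * u⁻¹ * w1⁻¹, (mem1 _).mpr (by
        rw [show w1⁻¹ * (w1 * u⁻¹ * w1⁻¹) * w1 = u⁻¹ from by group]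
        exact inv_mem hu), w2 * v⁻¹ * w2⁻¹, (mem2 _).mpr (by
        rw [show w2⁻¹ * (w2 * v⁻¹ * w2⁻¹) * w2 = v⁻¹ from by group]
        exact inv_mem hv), ?_⟩
    rw [helt']; group
  have hPQ : ∀ w : D J1 J2, P w ↔ Q (F w) := by
    intro w
    obtain ⟨u, hu, v, hv, hEq⟩ := hF w
    have E : Φ (rep J1) ∩ elt (F w) • Φ (rep J2)
        = (u⁻¹ * w1) • (Φ J1 ∩ elt w • Φ J2) :=
      stmt7_aux Φ sub hstab hw1 hw2 hu hv hEq
    constructor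
    · rintro ⟨w', hw'⟩
      exact ⟨u⁻¹ * w1 * w', by rw [E, hw']; simp [mul_smul]⟩
    · rintro ⟨w', hw'⟩
      rw [E] at hw'
      refine ⟨(u⁻¹ * w1)⁻¹ * w', ?_⟩
      rw [mul_smul, ← hw', inv_smul_smul]
  have hδ : ∀ w : D J1 J2, δO (cap J1 J2 w) = if P w then 1 else 0 := by
    intro w
    by_cases h : P w
    · rw [if_pos h]
      exact hδ1 _ (by rw [hcap]; exact h)
    · rw [if_neg h]
      exact hδ0 _ (by rw [hcap]; exact h)
  have e : {w : D J1 J2 // P w} ≃ {d : D (rep J1) (rep J2) // Q d} :=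
    Equiv.subtypeEquiv ⟨F, G, hGF, hFG⟩ hPQ
  calc ∑ w : D J1 J2, δO (cap J1 J2 w)
      = ∑ w : D J1 J2, if P w then (1 : ℤ) else 0 :=
        Finset.sum_congr rfl (fun w _ => hδ w)
    _ = ((Finset.univ.filter (fun w => P w)).card : ℤ) := by simp [Finset.sum_boole]
    _ = (Nat.card {w : D J1 J2 // P w} : ℤ) := by
        rw [Nat.card_eq_fintype_card, Fintype.card_subtype]
    _ = (Nat.card {d : D (rep J1) (rep J2) // Q d} : ℤ) := by
        rw [Nat.card_congr e]
end

section
/- Fix n ≥ 1 and partitions λ, μ, ν of n. Let ∼_ν denote the equivalence relation on {1,…,n} whose classes are the consecutive blocks of sizes ν_1, ν_2, …, and let S_λ, S_μ ⊆ S_n be the Young subgroups stabilizing ∼_λ, ∼_μ. Then the coefficient of m_λ(X) m_μ(Y) in the expansion of m_ν(XY) (where XY denotes the variables x_i y_j) equals (1/(|S_λ||S_μ|)) · Σ over w ∈ S_n with Part(∼_λ ∩ w(∼_μ)) = ν of |w^{-1} S_λ w ∩ S_μ|. -/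
/-!
Encode `∼_λ` and `∼_μ` by colorings `cl, cm : Fin n → Fin n` whose fibers are the classes,
numbered so that the fiber sizes are the padded parts of `λ` and `μ`. The group `S_λ × S_μ`
acts on `S_n` by `(a, b) • w = a w b⁻¹`. The orbit of `w` (a double coset) is determined by
its intersection matrix `(|cl⁻¹(r) ∩ w(cm⁻¹(s))|)_{r,s}`, these matrices are exactly the
`ℕ`-matrices with row sums `λ` and column sums `μ`, and the nonzero entries are the class sizes
of `∼_λ ∩ w(∼_μ)`. The stabilizer of `w` is `{(w v w⁻¹, v) | v ∈ w⁻¹ S_λ w ∩ S_μ}`, so Burnside's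
lemma, applied to the `w` with `Part(∼_λ ∩ w(∼_μ)) = ν`, gives
`∑_w |w⁻¹ S_λ w ∩ S_μ| = |S_λ| |S_μ| · #{matrices with nonzero entries ν}`.
-/

/-- The multiset recording, for each `i`, the size of the class of `i`:
it equals `ν₁,…,ν₁,ν₂,…` (each class size `k` repeated `k` times) iff the class sizes
realize the partition `ν`. -/
noncomputable def classSizes (n : ℕ) (R : Fin n → Fin n → Prop) : Multiset ℕ :=
  (Finset.univ : Finset (Fin n)).val.map fun i => Nat.card {j : Fin n // R i j}

/-- The target pattern of `classSizes` for a partition `ν`: each part `k` contributes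
`k` copies of `k`. -/
def pattern {n : ℕ} (ν : n.Partition) : Multiset ℕ :=
  ν.parts.bind fun k => Multiset.replicate k k

/-- The Young subgroup (as a set of permutations) attached to an equivalence
relation `R`: permutations preserving every class. -/
def young (n : ℕ) (R : Fin n → Fin n → Prop) : Set (Equiv.Perm (Fin n)) :=
  {w | ∀ i, R (w i) i}

/-- The sorted (decreasing) vector of parts of `λ`, padded with zeros to length `n`. -/
def paddedParts {n : ℕ} (lam : n.Partition) : List ℕ :=
  (lam.parts.sort (· ≤ ·)).reverse ++ List.replicate (n - Multiset.card lam.parts) 0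

open Finset

section Fibers

variable {α β γ : Type*}

theorem Multiset.count_bind_replicate_self (s : Multiset ℕ) (k : ℕ) :
    (s.bind fun j => replicate j j).count k = k * s.count k := by
  induction s using Multiset.induction with
  | empty => simp
  | cons a s ih =>
    rw [Multiset.cons_bind, Multiset.count_add, Multiset.count_cons, ih, Multiset.count_replicate]
    split_ifs <;> grind

theorem Multiset.count_map_univ [Fintype α] [DecidableEq β] (f : α → β) (b : β) :
    ((univ : Finset α).val.map f).count b = Nat.card {a // f a = b} := by
  rw [Multiset.count_map, Nat.card_eq_fintype_card, Fintype.card_subtype]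
  simp [Finset.filter, eq_comm]

theorem card_points_of_card_fiber_eq [Finite α] [Fintype β] (f : α → β) (k : ℕ) :
    Nat.card {a // Nat.card {x // f x = f a} = k}
      = k * Nat.card {b // Nat.card {x // f x = b} = k} := by
  rw [← Nat.card_congr (Equiv.sigmaSubtypeFiberEquivSubtype f
    (p := fun a => Nat.card {x // f x = f a} = k) (q := fun b => Nat.card {x // f x = b} = k)
    fun _ => Iff.rfl), Nat.card_sigma]
  simp [Finset.sum_congr rfl fun (b : {b // Nat.card {x // f x = b} = k}) _ => b.2, mul_comm]

theorem Multiset.filter_map_univ [Fintype α] (f : α → β) (p : β → Prop) [DecidablePred p] :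
    ((univ : Finset α).val.map f).filter p = (univ : Finset {a // p (f a)}).val.map (f ∘ (↑)) := by
  classical
  rw [Multiset.filter_map, ← Multiset.map_map, univ_val_map_subtype_val]
  rfl

/-- The points list the size of their own fiber, so a nonempty fiber of size `k` is listed
`k` times. -/
theorem map_card_fiber_eq_bind_replicate_iff [Fintype α] [Fintype β] (f : α → β)
    (P : Multiset ℕ) (hP : ∀ k ∈ P, 0 < k) :
    (univ : Finset α).val.map (fun a => Nat.card {x // f x = f a})
        = P.bind (fun k => Multiset.replicate k k) ↔
      ((univ : Finset β).val.map fun b => Nat.card {x // f x = b}).filter (0 < ·) = P := by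
  classical
  simp only [Multiset.ext]
  refine forall_congr' fun k => ?_
  rw [Multiset.count_bind_replicate_self, Multiset.count_map_univ, card_points_of_card_fiber_eq]
  rcases k.eq_zero_or_pos with rfl | hk
  · have : P.count 0 = 0 := Multiset.count_eq_zero.2 fun h => (hP 0 h).ne rfl
    simp [this]
  · rw [Multiset.count_filter_of_pos (p := (0 < ·)) hk, Multiset.count_map_univ,
      Nat.mul_left_cancel_iff hk]

theorem exists_equiv_comp_eq_of_card_fiber_eq [Finite α] [Finite β] (f : α → γ) (g : β → γ)
    (h : ∀ c, Nat.card {a // f a = c} = Nat.card {b // g b = c}) :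
    ∃ e : α ≃ β, ∀ a, g (e a) = f a :=
  ⟨Equiv.ofFiberEquiv fun c => (Finite.card_eq.1 (h c)).some, Equiv.ofFiberEquiv_map _⟩

theorem exists_relabel_card_fiber_eq [Fintype α] [Fintype β] [Fintype γ] (f : α → β)
    (g : γ → ℕ)
    (h : ((univ : Finset β).val.map fun b => Nat.card {x // f x = b}).filter (0 < ·)
      = ((univ : Finset γ).val.map g).filter (0 < ·)) :
    ∃ c : α → γ, (∀ x y, c x = c y ↔ f x = f y) ∧ ∀ r, Nat.card {x // c x = r} = g r := by
  classical
  rw [Multiset.filter_map_univ, Multiset.filter_map_univ] at h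
  obtain ⟨e, he⟩ := exists_equiv_comp_eq_of_card_fiber_eq
      (fun b : {b // 0 < Nat.card {x // f x = b}} => Nat.card {x // f x = b})
      (fun r : {r // 0 < g r} => g r) fun k => by
    rw [← Multiset.count_map_univ, ← Multiset.count_map_univ]
    exact congrArg (Multiset.count k) h
  have hpos : ∀ x, 0 < Nat.card {y // f y = f x} := fun x =>
    Nat.card_pos_iff.2 ⟨⟨⟨x, rfl⟩⟩, inferInstance⟩
  refine ⟨fun x => e ⟨f x, hpos x⟩, fun x y => ?_, fun r => ?_⟩
  · simp [← Subtype.ext_iff, e.injective.eq_iff]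
  by_cases hr : 0 < g r
  · obtain ⟨b, hb⟩ := e.surjective ⟨r, hr⟩
    calc Nat.card {x // (e ⟨f x, hpos x⟩ : γ) = r} = Nat.card {x // f x = b} :=
          Nat.card_congr <| Equiv.subtypeEquivRight fun x => by
            rw [show r = (e b : γ) by rw [hb], ← Subtype.ext_iff, e.injective.eq_iff,
              Subtype.ext_iff]
      _ = g r := by rw [← he b, hb]
  · have : IsEmpty {x // (e ⟨f x, hpos x⟩ : γ) = r} := ⟨fun x => hr (x.2 ▸ (e _).2)⟩
    simpa using (Nat.le_zero.1 (not_lt.1 hr)).symm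

theorem sum_card_fiber [Finite α] [Fintype β] (f : α → β) :
    ∑ b, Nat.card {x // f x = b} = Nat.card α := by
  rw [← Nat.card_sigma, Nat.card_congr (Equiv.sigmaFiberEquiv f)]

theorem sum_card_fiber_prod_left [Finite α] [Fintype γ] (F : α → β × γ) (r : β) :
    ∑ s, Nat.card {x // F x = (r, s)} = Nat.card {x // (F x).1 = r} := by
  rw [← sum_card_fiber fun x : {x // (F x).1 = r} => (F x).2]
  refine Finset.sum_congr rfl fun s _ => Nat.card_congr ?_
  exact (Equiv.subtypeEquivRight fun x => Prod.ext_iff).trans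
    (Equiv.subtypeSubtypeEquivSubtypeInter _ _).symm

theorem sum_card_fiber_prod_right [Finite α] [Fintype β] (F : α → β × γ) (s : γ) :
    ∑ r, Nat.card {x // F x = (r, s)} = Nat.card {x // (F x).2 = s} := by
  rw [← sum_card_fiber fun x : {x // (F x).2 = s} => (F x).1]
  refine Finset.sum_congr rfl fun r _ => Nat.card_congr ?_
  exact (Equiv.subtypeEquivRight fun x => Prod.ext_iff.trans and_comm).trans
    (Equiv.subtypeSubtypeEquivSubtypeInter _ _).symm

theorem exists_card_fiber_eq [Finite α] [Fintype β] (c : β → ℕ) (h : ∑ r, c r = Nat.card α) :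
    ∃ f : α → β, ∀ r, Nat.card {x // f x = r} = c r := by
  obtain ⟨e⟩ := Finite.card_eq.1 (h.symm.trans (by simp) :
    Nat.card α = Nat.card (Σ r, Fin (c r)))
  refine ⟨fun x => (e x).1, fun r => ?_⟩
  show Nat.card {x // (e x).1 = r} = c r
  rw [Nat.card_congr (e.subtypeEquiv (q := fun p => p.1 = r) fun _ => Iff.rfl),
    Nat.card_congr (Equiv.sigmaSubtype r), Nat.card_fin]

end Fibers

section Partitions

variable {n : ℕ}

theorem Nat.Partition.card_parts_le (lam : n.Partition) : Multiset.card lam.parts ≤ n := by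
  simpa [lam.parts_sum] using
    Multiset.card_nsmul_le_sum (s := lam.parts) (a := 1) fun _ h => lam.parts_pos h

theorem length_paddedParts (lam : n.Partition) : (paddedParts lam).length = n := by
  simp [paddedParts, lam.card_parts_le]

theorem filter_pos_map_paddedParts (lam : n.Partition) :
    ((univ : Finset (Fin n)).val.map fun r : Fin n => (paddedParts lam).getD r 0).filter (0 < ·)
      = lam.parts := by
  have hofFn : List.ofFn (fun r : Fin n => (paddedParts lam).getD r 0) = paddedParts lam :=
    List.ext_getElem (by simp [length_paddedParts]) fun i _ hi => by simp [hi]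
  rw [Fin.univ_val_map, hofFn, paddedParts, ← Multiset.coe_add, Multiset.filter_add,
    Multiset.filter_eq_self.2, Multiset.coe_reverse, Multiset.sort_eq]
  · simp
  · simpa using fun _ => lam.parts_pos

theorem classSizes_eq_pattern_iff {β : Type*} [Fintype β] (f : Fin n → β) (ν : n.Partition) :
    classSizes n (fun i j => f i = f j) = pattern ν ↔
      ((univ : Finset β).val.map fun b => Nat.card {x // f x = b}).filter (0 < ·) = ν.parts := by
  rw [← map_card_fiber_eq_bind_replicate_iff f ν.parts fun _ => ν.parts_pos, classSizes, pattern]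
  exact Eq.congr_left <| Multiset.map_congr rfl fun i _ =>
    Nat.card_congr (Equiv.subtypeEquivRight fun _ => eq_comm)

theorem exists_coloring_of_classSizes_eq_pattern {R : Fin n → Fin n → Prop} (hR : Equivalence R)
    {lam : n.Partition} (h : classSizes n R = pattern lam) :
    ∃ c : Fin n → Fin n, (∀ i j, R i j ↔ c i = c j) ∧
      ∀ r, Nat.card {i // c i = r} = (paddedParts lam).getD r 0 := by
  classical
  let s : Setoid (Fin n) := ⟨R, hR⟩
  have := Fintype.ofFinite (Quotient s)
  have hRq : R = fun i j => (⟦i⟧ : Quotient s) = ⟦j⟧ := by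
    funext i j
    exact propext (Quotient.eq (r := s)).symm
  rw [hRq, classSizes_eq_pattern_iff, ← filter_pos_map_paddedParts] at h
  obtain ⟨c, hc, hcard⟩ := exists_relabel_card_fiber_eq _ _ h
  exact ⟨c, fun i j => hRq ▸ (hc i j).symm, hcard⟩

end Partitions

theorem MulAction.card_orbitRel_quotient_eq {G X T : Type*} [Group G] [MulAction G X]
    (φ : X → T) (hφ : Function.Surjective φ) (h : ∀ x y, φ x = φ y ↔ ∃ g : G, g • y = x) :
    Nat.card (orbitRel.Quotient G X) = Nat.card T :=
  Nat.card_congr <| (Quotient.congrRight fun x y => (h x y).symm).trans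
    (Setoid.quotientKerEquivOfSurjective φ hφ)

section DoubleCoset

open MulAction

variable {G : Type*} [Group G] (H K : Subgroup G)

/-- The orbits are the double cosets `H x K`. -/
instance Subgroup.prodMulActionDoubleCoset : MulAction (H × K) G where
  smul g x := g.1 * x * (g.2 : G)⁻¹
  one_smul x := by simp [HSMul.hSMul]
  mul_smul g g' x := by simp [HSMul.hSMul, mul_assoc]

theorem Subgroup.prod_smul_eq (g : H × K) (x : G) : g • x = g.1 * x * (g.2 : G)⁻¹ := rfl

theorem Subgroup.prod_smul_eq_self_iff (g : H × K) (x : G) :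
    g • x = x ↔ (g.1 : G) = x * g.2 * x⁻¹ := by
  rw [Subgroup.prod_smul_eq, mul_inv_eq_iff_eq_mul, ← eq_mul_inv_iff_mul_eq, mul_assoc]

/-- `(x, y) ↦ ((x y x⁻¹, y), x)` identifies these pairs with the pairs `(g, x)` such that
`g • x = x`, which Burnside's lemma counts. -/
theorem card_conj_mem_pairs_eq_card_orbits_mul [Finite G] (X : SubMulAction (H × K) G) :
    Nat.card {p : G × G // p.1 ∈ X ∧ p.1 * p.2 * p.1⁻¹ ∈ H ∧ p.2 ∈ K}
      = Nat.card (orbitRel.Quotient (H × K) X) * (Nat.card H * Nat.card K) := by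
  let e : {p : G × G // p.1 ∈ X ∧ p.1 * p.2 * p.1⁻¹ ∈ H ∧ p.2 ∈ K}
      ≃ {gx : (H × K) × X // gx.1 • gx.2 = gx.2} :=
    { toFun p := ⟨((⟨_, p.2.2.1⟩, ⟨_, p.2.2.2⟩), ⟨_, p.2.1⟩),
        Subtype.ext <| (Subgroup.prod_smul_eq_self_iff H K _ _).2 rfl⟩
      invFun gx := ⟨((gx.1.2 : G), (gx.1.1.2 : G)), gx.1.2.2, by
        rw [← (Subgroup.prod_smul_eq_self_iff H K _ _).1 (congrArg Subtype.val gx.2)]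
        exact gx.1.1.1.2, gx.1.1.2.2⟩
      left_inv _ := rfl
      right_inv gx := by
        ext
        · exact ((Subgroup.prod_smul_eq_self_iff H K _ _).1 (congrArg Subtype.val gx.2)).symm
        · rfl
        · rfl }
  rw [Nat.card_congr (e.trans (Equiv.subtypeProdEquivSigmaSubtype fun g x => g • x = x)),
    ← Nat.card_prod, ← Nat.card_prod]
  exact Nat.card_congr (sigmaFixedByEquivOrbitsProdGroup (H × K) X)

end DoubleCoset

section IntersectionMatrix

open Equiv MulAction

variable {α ι κ : Type*}

def fiberStabilizer (c : α → ι) : Subgroup (Perm α) where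
  carrier := {σ | ∀ x, c (σ x) = c x}
  mul_mem' ha hb x := (ha _).trans (hb x)
  one_mem' _ := rfl
  inv_mem' {σ} h x := by simpa using (h (σ⁻¹ x)).symm

theorem mem_fiberStabilizer {c : α → ι} {σ : Perm α} :
    σ ∈ fiberStabilizer c ↔ ∀ x, c (σ x) = c x := Iff.rfl

noncomputable def intersectionMatrix (cl : α → ι) (cm : α → κ) (w : Perm α) (r : ι) (s : κ) : ℕ :=
  Nat.card {x // (cl x, cm (w⁻¹ x)) = (r, s)}

def HasMargins [Fintype ι] [Fintype κ] (A : ι → κ → ℕ) (u : ι → ℕ) (v : κ → ℕ) : Prop :=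
  (∀ r, ∑ s, A r s = u r) ∧ ∀ s, ∑ r, A r s = v s

theorem intersectionMatrix_smul (cl : α → ι) (cm : α → κ) (w : Perm α)
    (g : fiberStabilizer cl × fiberStabilizer cm) :
    intersectionMatrix cl cm (g • w) = intersectionMatrix cl cm w := by
  obtain ⟨⟨a, ha⟩, ⟨b, hb⟩⟩ := g
  funext r s
  refine Nat.card_congr (Equiv.subtypeEquiv a⁻¹ fun x => ?_)
  have ha' : cl (a⁻¹ x) = cl x := (fiberStabilizer cl).inv_mem ha x
  simp only [Subgroup.prod_smul_eq, mul_inv_rev, inv_inv, Perm.mul_apply, hb _, ha']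

theorem exists_smul_eq_of_intersectionMatrix_eq [Finite α] {cl : α → ι} {cm : α → κ}
    {w w' : Perm α} (h : intersectionMatrix cl cm w = intersectionMatrix cl cm w') :
    ∃ g : fiberStabilizer cl × fiberStabilizer cm, g • w = w' := by
  obtain ⟨σ, hσ⟩ := exists_equiv_comp_eq_of_card_fiber_eq (fun x => (cl x, cm (w⁻¹ x)))
    (fun x => (cl x, cm (w'⁻¹ x))) fun p => congrFun (congrFun h p.1) p.2
  simp only [Prod.ext_iff] at hσ
  refine ⟨(⟨σ, fun x => (hσ x).1⟩, ⟨w'⁻¹ * σ * w, fun x => ?_⟩), ?_⟩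
  · simpa using (hσ (w x)).2
  · rw [Subgroup.prod_smul_eq]
    simp only
    group

theorem hasMargins_intersectionMatrix [Fintype α] [Fintype ι] [Fintype κ] (cl : α → ι)
    (cm : α → κ) (w : Perm α) :
    HasMargins (intersectionMatrix cl cm w) (fun r => Nat.card {x // cl x = r})
      (fun s => Nat.card {x // cm x = s}) := by
  refine ⟨fun r => sum_card_fiber_prod_left _ r, fun s => ?_⟩
  simp only [intersectionMatrix]
  rw [sum_card_fiber_prod_right]
  exact Nat.card_congr (Equiv.subtypeEquiv w⁻¹ fun _ => Iff.rfl)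

theorem exists_intersectionMatrix_eq [Fintype α] [Fintype ι] [Fintype κ] {cl : α → ι}
    {cm : α → κ} {A : ι → κ → ℕ}
    (hA : HasMargins A (fun r => Nat.card {x // cl x = r}) (fun s => Nat.card {x // cm x = s})) :
    ∃ w : Perm α, intersectionMatrix cl cm w = A := by
  -- Cut `α` into blocks of sizes `A r s`, move the blocks so that their row label is `cl`,
  -- then choose `w⁻¹` so that their column label is `cm`.
  obtain ⟨F₀, hF₀⟩ := exists_card_fiber_eq (fun p : ι × κ => A p.1 p.2) (α := α) <| by
    rw [Fintype.sum_prod_type, ← sum_card_fiber cl]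
    exact sum_congr rfl fun r _ => hA.1 r
  obtain ⟨σ, hσ⟩ := exists_equiv_comp_eq_of_card_fiber_eq cl (fun x => (F₀ x).1) fun r => by
    rw [← sum_card_fiber_prod_left]
    exact (hA.1 r).symm.trans (sum_congr rfl fun s _ => (hF₀ (r, s)).symm)
  have hF : ∀ p, Nat.card {x // F₀ (σ x) = p} = A p.1 p.2 := fun p =>
    (Nat.card_congr (σ.subtypeEquiv fun _ => Iff.rfl)).trans (hF₀ p)
  obtain ⟨τ, hτ⟩ := exists_equiv_comp_eq_of_card_fiber_eq (fun x => (F₀ (σ x)).2) cm fun s => by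
    rw [← sum_card_fiber_prod_right]
    exact (sum_congr rfl fun r _ => hF (r, s)).trans (hA.2 s)
  refine ⟨τ⁻¹, funext fun r => funext fun s => ?_⟩
  rw [← hF (r, s)]
  refine Nat.card_congr (Equiv.subtypeEquivRight fun x => ?_)
  rw [inv_inv, ← hσ x, hτ x]

noncomputable def positiveEntries [Fintype ι] [Fintype κ] (A : ι → κ → ℕ) :
    Multiset ℕ :=
  ((univ : Finset (ι × κ)).val.map fun p => A p.1 p.2).filter (0 < ·)

theorem card_conj_mem_pairs_eq_card_hasMargins_mul [Fintype α] [Fintype ι] [Fintype κ]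
    (cl : α → ι) (cm : α → κ) (S : Set (ι → κ → ℕ)) :
    Nat.card {p : Perm α × Perm α // intersectionMatrix cl cm p.1 ∈ S ∧
        p.1 * p.2 * p.1⁻¹ ∈ fiberStabilizer cl ∧ p.2 ∈ fiberStabilizer cm}
      = Nat.card {A // A ∈ S ∧ HasMargins A (fun r => Nat.card {x // cl x = r})
          (fun s => Nat.card {x // cm x = s})}
        * (Nat.card (fiberStabilizer cl) * Nat.card (fiberStabilizer cm)) := by
  let X : SubMulAction (fiberStabilizer cl × fiberStabilizer cm) (Perm α) :=
    { carrier := {w | intersectionMatrix cl cm w ∈ S}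
      smul_mem' g w hw := by rwa [Set.mem_ofPred_eq, intersectionMatrix_smul] }
  refine (card_conj_mem_pairs_eq_card_orbits_mul _ _ X).trans (congrArg (· * _) ?_)
  refine MulAction.card_orbitRel_quotient_eq (T := {A // A ∈ S ∧ HasMargins A _ _})
    (fun w => ⟨intersectionMatrix cl cm w, w.2, hasMargins_intersectionMatrix cl cm w⟩) ?_ ?_
  · rintro ⟨A, hS, hA⟩
    obtain ⟨w, rfl⟩ := exists_intersectionMatrix_eq hA
    exact ⟨⟨w, hS⟩, rfl⟩
  · intro x y
    simp only [Subtype.mk.injEq]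
    constructor
    · intro h
      obtain ⟨g, hg⟩ := exists_smul_eq_of_intersectionMatrix_eq h.symm
      exact ⟨g, Subtype.ext hg⟩
    · rintro ⟨g, rfl⟩
      exact intersectionMatrix_smul cl cm y g

end IntersectionMatrix

section YoungSubgroups

open Equiv

variable {n : ℕ} {ι κ : Type*}

theorem card_young_eq_card_fiberStabilizer {R : Fin n → Fin n → Prop} {c : Fin n → ι}
    (h : ∀ i j, R i j ↔ c i = c j) : Nat.card (young n R) = Nat.card (fiberStabilizer c) :=
  Nat.card_congr (Equiv.subtypeEquivRight fun σ => by simp [young, mem_fiberStabilizer, h])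

theorem classSizes_inter_eq_pattern_iff [Fintype ι] [Fintype κ] {Rl Rm : Fin n → Fin n → Prop}
    {cl : Fin n → ι} {cm : Fin n → κ} (hl : ∀ i j, Rl i j ↔ cl i = cl j)
    (hm : ∀ i j, Rm i j ↔ cm i = cm j) (w : Perm (Fin n)) (ν : n.Partition) :
    classSizes n (fun i j => Rl i j ∧ Rm (w⁻¹ i) (w⁻¹ j)) = pattern ν ↔
      positiveEntries (intersectionMatrix cl cm w) = ν.parts := by
  have : (fun i j => Rl i j ∧ Rm (w⁻¹ i) (w⁻¹ j))
      = fun i j => (cl i, cm (w⁻¹ i)) = (cl j, cm (w⁻¹ j)) := by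
    funext i j
    simp [hl, hm]
  rw [this]
  exact classSizes_eq_pattern_iff (fun i => (cl i, cm (w⁻¹ i))) ν

theorem card_young_pairs_eq_card_hasMargins_mul [Fintype ι] [Fintype κ]
    {Rl Rm : Fin n → Fin n → Prop} {cl : Fin n → ι} {cm : Fin n → κ}
    (hl : ∀ i j, Rl i j ↔ cl i = cl j) (hm : ∀ i j, Rm i j ↔ cm i = cm j) (ν : n.Partition) :
    Nat.card {p : Perm (Fin n) × Perm (Fin n) //
        classSizes n (fun i j => Rl i j ∧ Rm (p.1⁻¹ i) (p.1⁻¹ j)) = pattern ν ∧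
        (∀ i, Rl ((p.1 * p.2 * p.1⁻¹) i) i) ∧ (∀ i, Rm (p.2 i) i)}
      = Nat.card {A // positiveEntries A = ν.parts ∧ HasMargins A
          (fun r => Nat.card {x // cl x = r}) (fun s => Nat.card {x // cm x = s})}
        * (Nat.card (young n Rl) * Nat.card (young n Rm)) := by
  rw [card_young_eq_card_fiberStabilizer hl, card_young_eq_card_fiberStabilizer hm]
  refine (Nat.card_congr (Equiv.subtypeEquivRight fun p => ?_)).trans
    (card_conj_mem_pairs_eq_card_hasMargins_mul cl cm {A | positiveEntries A = ν.parts})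
  rw [classSizes_inter_eq_pattern_iff hl hm]
  simp only [hl, hm, mem_fiberStabilizer, Set.mem_ofPred_eq]

end YoungSubgroups

theorem stmt_12_general (n : ℕ) (lam mu nu : n.Partition)
    (Rl Rm : Fin n → Fin n → Prop)
    (hRl : Equivalence Rl) (hRm : Equivalence Rm)
    -- `∼_λ` and `∼_μ` realize the partitions `λ` and `μ`
    (hlam : classSizes n Rl = pattern lam)
    (hmu : classSizes n Rm = pattern mu) :
    -- coefficient of `m_λ(X) m_μ(Y)` in `m_ν(XY)`, as a matrix count
    (Nat.card {A : Fin n → Fin n → ℕ //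
        (((Finset.univ : Finset (Fin n × Fin n)).val.map fun p => A p.1 p.2).filter
            (fun a => 0 < a)) = nu.parts ∧
        (∀ i : Fin n, (∑ j, A i j) = (paddedParts lam).getD i 0) ∧
        (∀ j : Fin n, (∑ i, A i j) = (paddedParts mu).getD j 0)} : ℚ)
    =
    (1 / ((Nat.card (young n Rl) : ℚ) * (Nat.card (young n Rm) : ℚ))) *
      (Nat.card {p : Equiv.Perm (Fin n) × Equiv.Perm (Fin n) //
        classSizes n (fun i j => Rl i j ∧ Rm (p.1⁻¹ i) (p.1⁻¹ j)) = pattern nu ∧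
        (∀ i, Rl ((p.1 * p.2 * p.1⁻¹) i) i) ∧ (∀ i, Rm (p.2 i) i)} : ℚ) := by
  obtain ⟨cl, hRcl, hcl⟩ := exists_coloring_of_classSizes_eq_pattern hRl hlam
  obtain ⟨cm, hRcm, hcm⟩ := exists_coloring_of_classSizes_eq_pattern hRm hmu
  have hcount := card_young_pairs_eq_card_hasMargins_mul hRcl hRcm nu
  simp only [hcl, hcm] at hcount
  have hYl : Nat.card (young n Rl) ≠ 0 :=
    (card_young_eq_card_fiberStabilizer hRcl).trans_ne Nat.card_pos.ne'
  have hYm : Nat.card (young n Rm) ≠ 0 :=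
    (card_young_eq_card_fiberStabilizer hRcm).trans_ne Nat.card_pos.ne'
  rw [hcount]
  push_cast
  field_simp
  rfl

theorem stmt_12 (n : ℕ) (hn : 1 ≤ n) (lam mu nu : n.Partition)
    (Rl Rm : Fin n → Fin n → Prop)
    (hRl : Equivalence Rl) (hRm : Equivalence Rm)
    -- `∼_λ` and `∼_μ` realize the partitions `λ` and `μ`
    (hlam : classSizes n Rl = pattern lam)
    (hmu : classSizes n Rm = pattern mu) :
    -- coefficient of `m_λ(X) m_μ(Y)` in `m_ν(XY)`, as a matrix count
    (Nat.card {A : Fin n → Fin n → ℕ //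
        (((Finset.univ : Finset (Fin n × Fin n)).val.map fun p => A p.1 p.2).filter
            (fun a => 0 < a)) = nu.parts ∧
        (∀ i : Fin n, (∑ j, A i j) = (paddedParts lam).getD i 0) ∧
        (∀ j : Fin n, (∑ i, A i j) = (paddedParts mu).getD j 0)} : ℚ)
    =
    (1 / ((Nat.card (young n Rl) : ℚ) * (Nat.card (young n Rm) : ℚ))) *
      (Nat.card {p : Equiv.Perm (Fin n) × Equiv.Perm (Fin n) //
        classSizes n (fun i j => Rl i j ∧ Rm (p.1⁻¹ i) (p.1⁻¹ j)) = pattern nu ∧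
        (∀ i, Rl ((p.1 * p.2 * p.1⁻¹) i) i) ∧ (∀ i, Rm (p.2 i) i)} : ℚ) :=
  stmt_12_general n lam mu nu Rl Rm hRl hRm hlam hmu
end
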